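/- arXiv:2104.04838 — 2 statements merged into one kernel-verified Lean document; each statement's English description precedes it below -/
import Mathlib

section
/- With the Hall polytope P = P((u_i)_{i=1}^m, μ) as above, for each I ⊆ [m] the face F_I = {α ∈ P : Σ_{i∈I} α_i = μ(A_I)} splits as a product: F_I equals the set of α ∈ Δ_m whose restriction to coordinates in I lies in μ(A_I)·P_I and whose restriction to coordinates in [m]\I lies in μ(X\A_I)·P̂_I, where P_I is the Hall polytope associated with the vectors (u_i)_{i∈I} and the normalized restricted measure μ(A_I)^{-1} μ|_{A_I}, and P̂_I is the Hall polytope associated with (u_i)_{i∈[m]\I} and μ(X\A_I)^{-1} μ|_{X\A_I}. (If μ(A_I) = 0 then P_I = {0}, and similarly for the complement.) -/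
/-!
Write `A_J` for `hallSet c J`. Since `A_{J ∪ K} = A_J ∪ A_K` and `μ = μ|_{A_I} + μ|_{A_Iᶜ}`,
a Hall constraint `Σ_J α ≤ μ(A_J)` follows from the constraint of `μ|_{A_I}` on `J ∩ I` and that
of `μ|_{A_Iᶜ}` on `J \ I`. Conversely, on the face `Σ_I α = μ(A_I)` the constraint for `I ∪ K`,
with `K` disjoint from `I`, leaves exactly `Σ_K α ≤ μ(A_{I ∪ K}) - μ(A_I) = μ|_{A_Iᶜ}(A_K)`.
-/

open MeasureTheory

/-- The set `A_I = {x : ∃ i ∈ I, c(x,u_i) < ∞}` (the target space is identified with `Fin m`). -/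
def hallSet {X : Type*} {m : ℕ} (c : X → Fin m → EReal) (I : Finset (Fin m)) : Set X :=
  {x | ∃ i ∈ I, c x i ≠ ⊤}

theorem MeasureTheory.measureReal_restrict_add_restrict_compl {X : Type*} [MeasurableSpace X]
    (μ : Measure X) [IsFiniteMeasure μ] {s : Set X} (hs : MeasurableSet s) (t : Set X) :
    (μ.restrict s).real t + (μ.restrict sᶜ).real t = μ.real t := by
  rw [measureReal_def, measureReal_def, ← ENNReal.toReal_add (measure_ne_top _ _)
    (measure_ne_top _ _), ← Measure.add_apply, Measure.restrict_add_restrict_compl hs,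
    measureReal_def]

section HallSet

variable {X : Type*} {m : ℕ} (c : X → Fin m → EReal)

theorem hallSet_mono {J K : Finset (Fin m)} (h : J ⊆ K) : hallSet c J ⊆ hallSet c K :=
  fun _ ⟨i, hi, hx⟩ => ⟨i, h hi, hx⟩

theorem hallSet_union (J K : Finset (Fin m)) :
    hallSet c (J ∪ K) = hallSet c J ∪ hallSet c K := by
  ext x
  simp [hallSet, or_and_right, exists_or]

variable [MeasurableSpace X]

theorem measurableSet_hallSet (hA : ∀ i : Fin m, MeasurableSet {x | c x i ≠ ⊤})
    (J : Finset (Fin m)) : MeasurableSet (hallSet c J) := by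
  have hJ : hallSet c J = ⋃ i ∈ J, {x | c x i ≠ ⊤} := by ext; simp [hallSet]
  exact hJ ▸ J.measurableSet_biUnion fun i _ => hA i

variable (μ : Measure X)

theorem measureReal_restrict_hallSet_of_subset {I J : Finset (Fin m)} (hJ : J ⊆ I) :
    (μ.restrict (hallSet c I)).real (hallSet c J) = μ.real (hallSet c J) := by
  rw [measureReal_def, Measure.restrict_eq_self μ (hallSet_mono c hJ), measureReal_def]

variable [IsFiniteMeasure μ]

theorem measureReal_restrict_compl_hallSet (hA : ∀ i : Fin m, MeasurableSet {x | c x i ≠ ⊤})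
    (I K : Finset (Fin m)) :
    (μ.restrict (hallSet c I)ᶜ).real (hallSet c K) =
      μ.real (hallSet c (I ∪ K)) - μ.real (hallSet c I) := by
  rw [measureReal_restrict_apply (measurableSet_hallSet c hA K), ← Set.sdiff_eq, hallSet_union,
    ← measureReal_add_sdiff (measurableSet_hallSet c hA I)]
  ring

end HallSet

section HallFace

variable {X : Type*} [MeasurableSpace X] {m : ℕ} (c : X → Fin m → EReal)
  (μ : Measure X) [IsFiniteMeasure μ]
  {α : Fin m → ℝ} {I : Finset (Fin m)}

theorem sum_le_restrict_compl_hallSet_of_face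
    (hA : ∀ i : Fin m, MeasurableSet {x | c x i ≠ ⊤})
    (hP : ∀ J, ∑ i ∈ J, α i ≤ μ.real (hallSet c J))
    (hI : ∑ i ∈ I, α i = μ.real (hallSet c I)) {K : Finset (Fin m)} (hK : Disjoint I K) :
    ∑ i ∈ K, α i ≤ (μ.restrict (hallSet c I)ᶜ).real (hallSet c K) := by
  have hIK := hP (I ∪ K)
  rw [Finset.sum_union hK] at hIK
  rw [measureReal_restrict_compl_hallSet c μ hA]
  linarith

theorem sum_le_measureReal_hallSet_of_blocks
    (hA : ∀ i : Fin m, MeasurableSet {x | c x i ≠ ⊤})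
    (hIn : ∀ J ⊆ I, ∑ i ∈ J, α i ≤ (μ.restrict (hallSet c I)).real (hallSet c J))
    (hOut : ∀ K ⊆ Iᶜ, ∑ i ∈ K, α i ≤ (μ.restrict (hallSet c I)ᶜ).real (hallSet c K))
    (J : Finset (Fin m)) :
    ∑ i ∈ J, α i ≤ μ.real (hallSet c J) :=
  calc ∑ i ∈ J, α i = ∑ i ∈ J ∩ I, α i + ∑ i ∈ J \ I, α i :=
        (Finset.sum_inter_add_sum_sdiff J I α).symm
    _ ≤ (μ.restrict (hallSet c I)).real (hallSet c (J ∩ I)) +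
          (μ.restrict (hallSet c I)ᶜ).real (hallSet c (J \ I)) :=
        add_le_add (hIn _ Finset.inter_subset_right)
          (hOut _ (Finset.subset_compl_iff_disjoint_right.2 Finset.sdiff_disjoint))
    _ ≤ (μ.restrict (hallSet c I)).real (hallSet c J) +
          (μ.restrict (hallSet c I)ᶜ).real (hallSet c J) :=
        add_le_add (measureReal_mono (hallSet_mono c Finset.inter_subset_left))
          (measureReal_mono (hallSet_mono c Finset.sdiff_subset))
    _ = μ.real (hallSet c J) :=
        measureReal_restrict_add_restrict_compl μ (measurableSet_hallSet c hA I) _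

theorem sum_eq_one_iff_sum_compl_eq (hA : ∀ i : Fin m, MeasurableSet {x | c x i ≠ ⊤})
    [IsProbabilityMeasure μ] (hI : ∑ i ∈ I, α i = μ.real (hallSet c I)) :
    ∑ i, α i = 1 ↔ ∑ i ∈ Iᶜ, α i = μ.real (hallSet c I)ᶜ := by
  rw [← Finset.sum_add_sum_compl I α, hI, ← probReal_univ (μ := μ),
    ← measureReal_add_measureReal_compl (measurableSet_hallSet c hA I), add_right_inj]

end HallFace

theorem hallPolytope_face_splitting_general {X : Type*} [MeasurableSpace X] {m : ℕ}
    (c : X → Fin m → EReal)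
    (hA : ∀ i : Fin m, MeasurableSet {x | c x i ≠ ⊤})
    (μ : Measure X) [IsProbabilityMeasure μ]
    (I : Finset (Fin m)) :
    {α : Fin m → ℝ |
        (∀ i, 0 ≤ α i) ∧ (∑ i, α i = 1) ∧
        (∀ J : Finset (Fin m), ∑ i ∈ J, α i ≤ (μ (hallSet c J)).toReal) ∧
        ∑ i ∈ I, α i = (μ (hallSet c I)).toReal} =
      {α : Fin m → ℝ |
        (∀ i, 0 ≤ α i) ∧
        (∑ i ∈ I, α i = (μ (hallSet c I)).toReal) ∧
        (∑ i ∈ Iᶜ, α i = (μ (hallSet c I)ᶜ).toReal) ∧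
        (∀ J : Finset (Fin m), J ⊆ I →
          ∑ i ∈ J, α i ≤ (μ.restrict (hallSet c I) (hallSet c J)).toReal) ∧
        (∀ K : Finset (Fin m), K ⊆ Iᶜ →
          ∑ i ∈ K, α i ≤ (μ.restrict (hallSet c I)ᶜ (hallSet c K)).toReal)} := by
  ext α
  simp only [Set.mem_ofPred_eq, ← measureReal_def]
  constructor
  · rintro ⟨hα, hsum, hP, hI⟩
    refine ⟨hα, hI, (sum_eq_one_iff_sum_compl_eq c μ hA hI).1 hsum, fun J hJ => ?_,
      fun K hK => sum_le_restrict_compl_hallSet_of_face c μ hA hP hI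
        (Finset.subset_compl_iff_disjoint_left.1 hK)⟩
    rw [measureReal_restrict_hallSet_of_subset c μ hJ]
    exact hP J
  · rintro ⟨hα, hI, hIc, hIn, hOut⟩
    exact ⟨hα, (sum_eq_one_iff_sum_compl_eq c μ hA hI).2 hIc,
      sum_le_measureReal_hallSet_of_blocks c μ hA hIn hOut, hI⟩

/-- the face `F_I = {α ∈ P : Σ_{i∈I} α_i = μ(A_I)}` of the Hall polytope
splits as a product: it equals the set of `α` in the simplex whose `I`-block satisfies the
(scaled) Hall-polytope constraints of the normalized restriction `μ(A_I)⁻¹ μ|_{A_I}`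
(i.e. `Σ_{i∈J} α_i ≤ μ|_{A_I}(A_J)` for `J ⊆ I`, with block sum `μ(A_I)`), and whose
complementary block satisfies the Hall-polytope constraints of `μ(X\A_I)⁻¹ μ|_{X\A_I}`
(i.e. `Σ_{i∈K} α_i ≤ μ|_{X\A_I}(A_K)` for `K ⊆ Iᶜ`, with block sum `μ(X\A_I)`). -/
theorem hallPolytope_face_splitting {X : Type*} [MeasurableSpace X] {m : ℕ}
    (c : X → Fin m → EReal) (hbot : ∀ x i, c x i ≠ ⊥)
    (hA : ∀ i : Fin m, MeasurableSet {x | c x i ≠ ⊤})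
    (μ : Measure X) [IsProbabilityMeasure μ]
    (hsupp : μ {x | ∀ i, c x i = ⊤} = 0)
    (I : Finset (Fin m)) :
    {α : Fin m → ℝ |
        (∀ i, 0 ≤ α i) ∧ (∑ i, α i = 1) ∧
        (∀ J : Finset (Fin m), ∑ i ∈ J, α i ≤ (μ (hallSet c J)).toReal) ∧
        ∑ i ∈ I, α i = (μ (hallSet c I)).toReal} =
      {α : Fin m → ℝ |
        (∀ i, 0 ≤ α i) ∧
        (∑ i ∈ I, α i = (μ (hallSet c I)).toReal) ∧
        (∑ i ∈ Iᶜ, α i = (μ (hallSet c I)ᶜ).toReal) ∧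
        (∀ J : Finset (Fin m), J ⊆ I →
          ∑ i ∈ J, α i ≤ (μ.restrict (hallSet c I) (hallSet c J)).toReal) ∧
        (∀ K : Finset (Fin m), K ⊆ Iᶜ →
          ∑ i ∈ K, α i ≤ (μ.restrict (hallSet c I)ᶜ (hallSet c K)).toReal)} :=
  hallPolytope_face_splitting_general c hA μ I
end

section
/- Let μ be a probability measure on X supported on {x : ∃ i ∈ [m], c(x,u_i) < ∞} which is non-degenerate with respect to (u_i)_{i=1}^m, i.e., μ({x : c(x,u_i) < ∞} ∩ {x : c(x,u_j) < ∞}) > 0 for all i ≠ j. Then the Hall polytope P((u_i)_{i=1}^m, μ) ⊆ Δ_m has affine dimension m − 1 (i.e., it is full-dimensional in the simplex). -/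
open MeasureTheory

/-- The Hall polytope `P = {α ∈ Δ_m : ∀ I, Σ_{i∈I} α_i ≤ μ(A_I)}`. -/
def hallPolytope {X : Type*} [MeasurableSpace X] {m : ℕ} (c : X → Fin m → EReal)
    (μ : Measure X) : Set (Fin m → ℝ) :=
  {α | (∀ i, 0 ≤ α i) ∧ (∑ i, α i = 1) ∧
    ∀ I : Finset (Fin m), ∑ i ∈ I, α i ≤ (μ (hallSet c I)).toReal}

/-!
The Hall polytope lies in the hyperplane `∑ i, α i = 1`, so its affine dimension is at most
`m - 1`. Conversely, a point of the polytope with positive coordinates at which every Hall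
inequality for `∅ ≠ I ≠ univ` is strict has a neighbourhood in that hyperplane contained in the
polytope. Such a point is the average over `j` of the vectors `(μ (B j i))ᵢ`, where `B j` is a
measurable partition of `A_univ` with `B j i ⊆ A_i` and `B j j = A_j`: at the `j`-th vector the
inequality for `I ∌ j` is strict, because `A_I ∩ A_j` has positive measure by non-degeneracy but
lies in `B j j`, which is not counted in `∑ i ∈ I`.
-/

open Module Set Filter Topology
open scoped Function

section AffineSpan

variable {k V : Type*}

theorem direction_affineSpan_le_ker [Ring k] [AddCommGroup V] [Module k V] {W : Type*}
    [AddCommGroup W] [Module k W] {s : Set V} (f : V →ₗ[k] W) {r : W}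
    (hs : ∀ x ∈ s, f x = r) : (affineSpan k s).direction ≤ LinearMap.ker f := by
  rw [direction_affineSpan, vectorSpan_def, Submodule.span_le]
  rintro _ ⟨x, hx, y, hy, rfl⟩
  simp [hs x hx, hs y hy]

theorem le_direction_affineSpan_of_eventually_smul_vadd_mem {P : Type*}
    [NontriviallyNormedField k] [AddCommGroup V] [Module k V] [AddTorsor V P] {s : Set P} {p : P}
    (hp : p ∈ s) {W : Submodule k V} (h : ∀ v ∈ W, ∀ᶠ t in 𝓝 (0 : k), t • v +ᵥ p ∈ s) :
    W ≤ (affineSpan k s).direction := by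
  intro v hv
  obtain ⟨t, hts, ht⟩ :=
    ((h v hv).filter_mono nhdsWithin_le_nhds |>.and self_mem_nhdsWithin).exists (f := 𝓝[≠] 0)
  have := AffineSubspace.vsub_mem_direction (subset_affineSpan k s hts) (subset_affineSpan k s hp)
  rwa [vadd_vsub, Submodule.smul_mem_iff _ ht] at this

end AffineSpan

theorem finrank_ker_sumCoords_basisFun (K ι : Type*) [Field K] [Fintype ι] :
    finrank K (LinearMap.ker (Pi.basisFun K ι).sumCoords) = Fintype.card ι - 1 := by
  rcases isEmpty_or_nonempty ι with hι | ⟨⟨i⟩⟩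
  · have := Submodule.finrank_le (LinearMap.ker (Pi.basisFun K ι).sumCoords)
    rw [finrank_fintype_fun_eq_card, Fintype.card_eq_zero] at this
    rw [Fintype.card_eq_zero]
    omega
  · have hne : (Pi.basisFun K ι).sumCoords ≠ 0 := fun h => by
      simpa [h] using (Pi.basisFun K ι).sumCoords_self_apply (i := i)
    have := Module.Dual.finrank_ker_add_one_of_ne_zero hne
    rw [finrank_fintype_fun_eq_card] at this
    omega

section PriorityPartition

variable {X ι : Type*} [LinearOrder ι] [LocallyFiniteOrderBot ι]

/-- Each point of `⋃ i, A i` is assigned to `A j` if it lies there, and otherwise to the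
first `A i` containing it. -/
def priorityPartition (A : ι → Set X) (j : ι) : ι → Set X :=
  Function.update (disjointed fun i => A i \ A j) j (A j)

variable (A : ι → Set X) (j : ι)

@[simp]
theorem priorityPartition_self : priorityPartition A j j = A j :=
  Function.update_self ..

theorem priorityPartition_of_ne {i : ι} (h : i ≠ j) :
    priorityPartition A j i = disjointed (fun i => A i \ A j) i :=
  Function.update_of_ne h ..

theorem priorityPartition_subset (i : ι) : priorityPartition A j i ⊆ A i := by
  rcases eq_or_ne i j with rfl | h
  · simp
  · rw [priorityPartition_of_ne A j h]
    exact (disjointed_subset _ i).trans sdiff_subset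

theorem disjoint_priorityPartition_of_ne {i : ι} (h : i ≠ j) :
    Disjoint (priorityPartition A j i) (A j) := by
  rw [priorityPartition_of_ne A j h]
  exact disjoint_sdiff_left.mono_left (disjointed_subset _ i)

theorem pairwise_disjoint_priorityPartition : Pairwise (Disjoint on priorityPartition A j) := by
  intro i k hik
  simp only [Function.onFun]
  rcases eq_or_ne i j with rfl | hi
  · simpa using (disjoint_priorityPartition_of_ne A i hik.symm).symm
  rcases eq_or_ne k j with rfl | hk
  · simpa using disjoint_priorityPartition_of_ne A k hi
  rw [priorityPartition_of_ne A j hi, priorityPartition_of_ne A j hk]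
  exact disjoint_disjointed _ hik

theorem iUnion_priorityPartition : ⋃ i, priorityPartition A j i = ⋃ i, A i := by
  refine subset_antisymm (iUnion_mono (priorityPartition_subset A j)) fun x hx => ?_
  by_cases hxj : x ∈ A j
  · exact mem_iUnion.2 ⟨j, by simpa⟩
  obtain ⟨i, hi⟩ : ∃ i, x ∈ disjointed (fun i => A i \ A j) i := by
    rw [← mem_iUnion, iUnion_disjointed, ← iUnion_sdiff]
    exact ⟨hx, hxj⟩
  have hij : i ≠ j := by
    rintro rfl
    exact (disjointed_subset _ i hi).2 (disjointed_subset _ i hi).1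
  exact mem_iUnion.2 ⟨i, by rwa [priorityPartition_of_ne A j hij]⟩

theorem MeasurableSet.priorityPartition [MeasurableSpace X] [Countable ι]
    (hA : ∀ i, MeasurableSet (A i)) (i : ι) : MeasurableSet (priorityPartition A j i) := by
  rcases eq_or_ne i j with rfl | h
  · simpa using hA i
  · rw [priorityPartition_of_ne A j h, disjointed_eq_inter_compl]
    exact ((hA i).diff (hA j)).inter <|
      .iInter fun k => .iInter fun _ => ((hA k).diff (hA j)).compl

end PriorityPartition

section PriorityWeights

variable {X ι : Type*} [MeasurableSpace X] [LinearOrder ι] [LocallyFiniteOrderBot ι]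
  [Fintype ι] (μ : Measure X) [IsFiniteMeasure μ] {A : ι → Set X}
  (hA : ∀ i, MeasurableSet (A i)) (j : ι)
include hA

theorem sum_measureReal_priorityPartition (I : Finset ι) :
    ∑ i ∈ I, μ.real (priorityPartition A j i) = μ.real (⋃ i ∈ I, priorityPartition A j i) :=
  (measureReal_biUnion_finset (fun _ _ _ _ h => pairwise_disjoint_priorityPartition A j h)
    fun i _ => MeasurableSet.priorityPartition A j hA i).symm

theorem sum_measureReal_priorityPartition_le (I : Finset ι) :
    ∑ i ∈ I, μ.real (priorityPartition A j i) ≤ μ.real (⋃ i ∈ I, A i) := by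
  rw [sum_measureReal_priorityPartition μ hA]
  exact measureReal_mono (biUnion_mono subset_rfl fun i _ => priorityPartition_subset A j i)
    (measure_ne_top μ _)

theorem sum_measureReal_priorityPartition_lt {I : Finset ι} (hj : j ∉ I) {i₀ : ι}
    (hi₀ : i₀ ∈ I) (hpos : 0 < μ (A i₀ ∩ A j)) :
    ∑ i ∈ I, μ.real (priorityPartition A j i) < μ.real (⋃ i ∈ I, A i) := by
  have hdisj : Disjoint (⋃ i ∈ I, priorityPartition A j i) (A i₀ ∩ A j) :=
    disjoint_iUnion₂_left.2 fun i hi =>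
      (disjoint_priorityPartition_of_ne A j (ne_of_mem_of_not_mem hi hj)).mono_right
        inter_subset_right
  have hsub : (⋃ i ∈ I, priorityPartition A j i) ∪ (A i₀ ∩ A j) ⊆ ⋃ i ∈ I, A i :=
    union_subset (biUnion_mono subset_rfl fun i _ => priorityPartition_subset A j i)
      (inter_subset_left.trans (subset_biUnion_of_mem hi₀))
  calc ∑ i ∈ I, μ.real (priorityPartition A j i)
      < μ.real (⋃ i ∈ I, priorityPartition A j i) + μ.real (A i₀ ∩ A j) := by
        rw [sum_measureReal_priorityPartition μ hA]
        exact lt_add_of_pos_right _ (ENNReal.toReal_pos hpos.ne' (measure_ne_top μ _))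
    _ = μ.real ((⋃ i ∈ I, priorityPartition A j i) ∪ (A i₀ ∩ A j)) :=
        (measureReal_union hdisj ((hA i₀).inter (hA j)) (measure_ne_top μ _)).symm
    _ ≤ μ.real (⋃ i ∈ I, A i) := measureReal_mono hsub (measure_ne_top μ _)

theorem sum_measureReal_priorityPartition_univ :
    ∑ i, μ.real (priorityPartition A j i) = μ.real (⋃ i, A i) := by
  rw [sum_measureReal_priorityPartition μ hA]
  simp [iUnion_priorityPartition]

theorem exists_pos_sum_lt_measureReal_biUnion [Nontrivial ι]
    (hinter : Pairwise fun i j => 0 < μ (A i ∩ A j)) :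
    ∃ α : ι → ℝ, (∀ i, 0 < α i) ∧ ∑ i, α i = μ.real (⋃ i, A i) ∧
      ∀ I : Finset ι, ∑ i ∈ I, α i ≤ μ.real (⋃ i ∈ I, A i) ∧
        (I.Nonempty → I ≠ Finset.univ → ∑ i ∈ I, α i < μ.real (⋃ i ∈ I, A i)) := by
  have hn : (0 : ℝ) < Fintype.card ι := by positivity
  have hmean (I : Finset ι) :
      ∑ i ∈ I, (Fintype.card ι : ℝ)⁻¹ * ∑ j, μ.real (priorityPartition A j i) =
        (Fintype.card ι : ℝ)⁻¹ * ∑ j, ∑ i ∈ I, μ.real (priorityPartition A j i) := by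
    rw [← Finset.mul_sum, Finset.sum_comm]
  refine ⟨fun i => (Fintype.card ι : ℝ)⁻¹ * ∑ j, μ.real (priorityPartition A j i),
    fun i => ?_, ?_, fun I => ⟨?_, fun ⟨i₀, hi₀⟩ hI => ?_⟩⟩
  · obtain ⟨k, hk⟩ := exists_ne i
    have hβ : 0 < μ.real (priorityPartition A i i) := by
      rw [priorityPartition_self]
      exact ENNReal.toReal_pos ((hinter hk.symm).trans_le (measure_mono inter_subset_left)).ne'
        (measure_ne_top μ _)
    exact mul_pos (inv_pos.2 hn) <| hβ.trans_le <|
      Finset.single_le_sum (f := fun j => μ.real (priorityPartition A j i))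
        (fun j _ => measureReal_nonneg) (Finset.mem_univ i)
  · simp only [hmean, sum_measureReal_priorityPartition_univ μ hA, Finset.sum_const,
      Finset.card_univ, nsmul_eq_mul]
    field_simp
  · rw [hmean, inv_mul_le_iff₀ hn]
    exact (Finset.sum_le_sum fun j _ => sum_measureReal_priorityPartition_le μ hA j I).trans_eq
      (by simp)
  · obtain ⟨j, -, hj⟩ := Finset.exists_of_ssubset (Finset.ssubset_univ_iff.2 hI)
    rw [hmean, inv_mul_lt_iff₀ hn]
    simpa using Finset.sum_lt_sum (fun j _ => sum_measureReal_priorityPartition_le μ hA j I)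
      ⟨j, Finset.mem_univ j, sum_measureReal_priorityPartition_lt μ hA j hj hi₀
        (hinter (ne_of_mem_of_not_mem hi₀ hj))⟩

end PriorityWeights

section HallPolytope

variable {X : Type*} {m : ℕ} (c : X → Fin m → EReal)

theorem hallSet_eq_biUnion (I : Finset (Fin m)) :
    hallSet c I = ⋃ i ∈ I, {x | c x i ≠ ⊤} := by
  ext x
  simp [hallSet]

variable [MeasurableSpace X] (μ : Measure X)

theorem measureReal_hallSet_univ (hA : ∀ i : Fin m, MeasurableSet {x | c x i ≠ ⊤})
    [IsProbabilityMeasure μ] (hsupp : μ {x | ∀ i, c x i = ⊤} = 0) :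
    μ.real (hallSet c Finset.univ) = 1 := by
  have hmeas : MeasurableSet (hallSet c Finset.univ) := by
    rw [hallSet_eq_biUnion]
    exact .biUnion (Finset.univ : Finset (Fin m)).countable_toSet fun i _ => hA i
  have hcompl : (hallSet c Finset.univ)ᶜ = {x | ∀ i, c x i = ⊤} := by
    ext x
    simp [hallSet]
  rw [Measure.real, (prob_compl_eq_zero_iff hmeas).1 (hcompl ▸ hsupp), ENNReal.toReal_one]

theorem direction_affineSpan_hallPolytope_le_ker :
    (affineSpan ℝ (hallPolytope c μ)).direction ≤
      LinearMap.ker (Pi.basisFun ℝ (Fin m)).sumCoords :=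
  direction_affineSpan_le_ker _ (r := 1) fun α hα => by
    rw [Basis.coe_sumCoords_of_fintype]
    simpa using hα.2.1

theorem eventually_smul_add_mem_hallPolytope {α v : Fin m → ℝ} (hα : α ∈ hallPolytope c μ)
    (hpos : ∀ i, 0 < α i)
    (hlt : ∀ I : Finset (Fin m), I.Nonempty → I ≠ Finset.univ →
      ∑ i ∈ I, α i < μ.real (hallSet c I))
    (hv : ∑ i, v i = 0) :
    ∀ᶠ t in 𝓝 (0 : ℝ), t • v + α ∈ hallPolytope c μ := by
  have hsum (t : ℝ) (I : Finset (Fin m)) :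
      ∑ i ∈ I, (t • v + α) i = t * ∑ i ∈ I, v i + ∑ i ∈ I, α i := by
    simp [Finset.sum_add_distrib, Finset.mul_sum]
  have hnear {a b : ℝ} (s : ℝ) (hab : a < b) : ∀ᶠ t in 𝓝 (0 : ℝ), t * s + a < b :=
    (show Continuous fun t : ℝ => t * s + a by fun_prop).continuousAt.eventually_lt
      continuousAt_const (by simpa using hab)
  have hcoord : ∀ᶠ t in 𝓝 (0 : ℝ), ∀ i, 0 ≤ (t • v + α) i :=
    eventually_all.2 fun i => (hnear (-v i) (neg_lt_zero.2 (hpos i))).mono fun t ht => by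
      simp only [Pi.add_apply, Pi.smul_apply, smul_eq_mul]
      linarith
  have hhall : ∀ᶠ t in 𝓝 (0 : ℝ), ∀ I : Finset (Fin m),
      ∑ i ∈ I, (t • v + α) i ≤ μ.real (hallSet c I) := by
    refine eventually_all.2 fun I => ?_
    by_cases hI : I.Nonempty ∧ I ≠ Finset.univ
    · exact (hnear _ (hlt I hI.1 hI.2)).mono fun t ht => (hsum t I).le.trans ht.le
    · have hvI : ∑ i ∈ I, v i = 0 := by
        rcases I.eq_empty_or_nonempty with rfl | hne
        · simp
        · rwa [not_and_not_right.1 hI hne]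
      exact .of_forall fun t => by rw [hsum, hvI, mul_zero, zero_add]; exact hα.2.2 I
  filter_upwards [hcoord, hhall] with t ht hI
  exact ⟨ht, by rw [hsum, hv, mul_zero, zero_add]; exact hα.2.1, hI⟩

theorem ker_sumCoords_le_direction_affineSpan_hallPolytope [Nontrivial (Fin m)]
    [IsProbabilityMeasure μ] (hA : ∀ i : Fin m, MeasurableSet {x | c x i ≠ ⊤})
    (hsupp : μ {x | ∀ i, c x i = ⊤} = 0)
    (hnd : Pairwise fun i j => 0 < μ ({x | c x i ≠ ⊤} ∩ {x | c x j ≠ ⊤})) :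
    LinearMap.ker (Pi.basisFun ℝ (Fin m)).sumCoords ≤
      (affineSpan ℝ (hallPolytope c μ)).direction := by
  obtain ⟨α, hpos, hsum, hI⟩ := exists_pos_sum_lt_measureReal_biUnion μ hA hnd
  simp only [← hallSet_eq_biUnion] at hI
  have hα : α ∈ hallPolytope c μ := by
    refine ⟨fun i => (hpos i).le, ?_, fun I => (hI I).1⟩
    rw [hsum, ← measureReal_hallSet_univ c μ hA hsupp, hallSet_eq_biUnion]
    simp
  refine le_direction_affineSpan_of_eventually_smul_vadd_mem hα fun v hv => ?_
  rw [LinearMap.mem_ker, Basis.coe_sumCoords_of_fintype] at hv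
  exact eventually_smul_add_mem_hallPolytope c μ hα hpos (fun I => (hI I).2) (by simpa using hv)

end HallPolytope

theorem hallPolytope_full_dimensional_general {X : Type*} [MeasurableSpace X] {m : ℕ}
    (c : X → Fin m → EReal)
    (hA : ∀ i : Fin m, MeasurableSet {x | c x i ≠ ⊤})
    (μ : Measure X) [IsProbabilityMeasure μ]
    (hsupp : μ {x | ∀ i, c x i = ⊤} = 0)
    (hnd : ∀ i j : Fin m, i ≠ j → 0 < μ ({x | c x i ≠ ⊤} ∩ {x | c x j ≠ ⊤})) :
    Module.finrank ℝ (affineSpan ℝ (hallPolytope c μ)).direction = m - 1 := by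
  have hker := finrank_ker_sumCoords_basisFun ℝ (Fin m)
  rw [Fintype.card_fin] at hker
  refine le_antisymm
    (hker ▸ Submodule.finrank_mono (direction_affineSpan_hallPolytope_le_ker c μ)) ?_
  rcases lt_or_ge m 2 with hm | hm
  · omega
  have := Fin.nontrivial_iff_two_le.2 hm
  exact hker ▸ Submodule.finrank_mono
    (ker_sumCoords_le_direction_affineSpan_hallPolytope c μ hA hsupp hnd)

/-- if `μ` is non-degenerate with respect to `(u_i)` then the Hall polytope
is full-dimensional: its affine hull has dimension `m − 1`. -/
theorem hallPolytope_full_dimensional {X : Type*} [MeasurableSpace X] {m : ℕ}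
    (c : X → Fin m → EReal) (hbot : ∀ x i, c x i ≠ ⊥)
    (hA : ∀ i : Fin m, MeasurableSet {x | c x i ≠ ⊤})
    (μ : Measure X) [IsProbabilityMeasure μ]
    (hsupp : μ {x | ∀ i, c x i = ⊤} = 0)
    (hnd : ∀ i j : Fin m, i ≠ j → 0 < μ ({x | c x i ≠ ⊤} ∩ {x | c x j ≠ ⊤})) :
    Module.finrank ℝ (affineSpan ℝ (hallPolytope c μ)).direction = m - 1 :=
  hallPolytope_full_dimensional_general c hA μ hsupp hnd
end
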